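/- arXiv:2107.01561 — 3 statements merged into one kernel-verified Lean document; each statement's English description precedes it below -/
import Mathlib

section
/- A random variable X with density proportional to exp(−(s·|x−μ|/σ)^b), where s = √(Γ(3/b)/Γ(1/b)), has mean μ and variance σ². -/
/-!
After the shift `y = x - μ` the density is even, so the mean is `μ` times the total mass, and the
variance is the second moment. With `c = s / σ`, the absolute moments reduce via `u = (c |y|) ^ b`
to Gamma integrals: `∫ |y| ^ q e ^ (-(c |y|) ^ b) dy = 2 c ^ (-(q + 1)) Γ((q + 1) / b) / b`.
Normalised, the `q`-th absolute moment is `(σ / s) ^ q Γ((q + 1) / b) / Γ(1 / b)`: this is `1` for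
`q = 0`, and for `q = 2` the choice `s ^ 2 = Γ(3 / b) / Γ(1 / b)` makes it exactly `σ ^ 2`.
-/

open MeasureTheory Real Set

theorem integral_eq_zero_of_odd {G E : Type*} [MeasurableSpace G] [AddGroup G] [MeasurableNeg G]
    [NormedAddCommGroup E] [NormedSpace ℝ E] (μ : Measure G) [μ.IsNegInvariant] {f : G → E}
    (hf : ∀ x, f (-x) = -f x) : ∫ x, f x ∂μ = 0 := by
  have h := integral_neg_eq_self f μ
  simp_rw [hf, integral_neg] at h
  have h2 : (2 : ℝ) • ∫ x, f x ∂μ = 0 := by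
    rw [two_smul]
    nth_rewrite 1 [← h]
    exact neg_add_cancel _
  exact (smul_eq_zero.mp h2).resolve_left two_ne_zero

theorem integrable_comp_abs_of_integrableOn_Ioi {E : Type*} [NormedAddCommGroup E] {f : ℝ → E}
    (hf : IntegrableOn f (Ioi 0)) : Integrable fun x ↦ f |x| := by
  have h_Ioi : IntegrableOn (fun x ↦ f |x|) (Ioi 0) :=
    hf.congr_fun (fun x hx ↦ by rw [abs_of_pos hx]) measurableSet_Ioi
  have h_Iic : IntegrableOn (fun x ↦ f |x|) (Iic 0) := by
    rw [← Measure.map_neg_eq_self (volume : Measure ℝ),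
      measurableEmbedding_neg.integrableOn_map_iff]
    simp_rw [Function.comp_def, abs_neg, neg_preimage, neg_Iic, neg_zero]
    exact (integrableOn_Ici_iff_integrableOn_Ioi).mpr h_Ioi
  simpa using h_Iic.union h_Ioi

theorem integral_mul_comp_sub_of_even {g : ℝ → ℝ} (hg : ∀ y, g (-y) = g y) (hg_int : Integrable g)
    (hg_mom : Integrable fun y ↦ y * g y) (μ : ℝ) :
    ∫ x, x * g (x - μ) = μ * ∫ y, g y := by
  have h_odd : ∫ y, y * g y = 0 := integral_eq_zero_of_odd volume fun y ↦ by rw [hg]; ring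
  calc ∫ x, x * g (x - μ) = ∫ y, (y * g y + μ * g y) := by
        rw [← integral_sub_right_eq_self (fun y ↦ y * g y + μ * g y) μ]
        congr 1 with x
        ring
    _ = μ * ∫ y, g y := by
        rw [integral_add hg_mom (hg_int.const_mul μ), h_odd, integral_const_mul, zero_add]

section GammaMoments

variable {b c q : ℝ}

theorem rpow_mul_exp_neg_rpow_mul_eqOn (hc : 0 ≤ c) :
    EqOn (fun t ↦ t ^ q * exp (-(c * t) ^ b)) (fun t ↦ t ^ q * exp (-c ^ b * t ^ b)) (Ioi 0) :=
  fun t ht ↦ by simp only [mul_rpow hc (le_of_lt ht), neg_mul]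

theorem integrableOn_rpow_mul_exp_neg_rpow_mul (hb : 0 < b) (hc : 0 < c) (hq : -1 < q) :
    IntegrableOn (fun t ↦ t ^ q * exp (-(c * t) ^ b)) (Ioi 0) :=
  (integrableOn_rpow_mul_exp_neg_mul_rpow hq hb (rpow_pos_of_pos hc b)).congr_fun
    (rpow_mul_exp_neg_rpow_mul_eqOn hc.le).symm measurableSet_Ioi

theorem integral_Ioi_rpow_mul_exp_neg_rpow_mul (hb : 0 < b) (hc : 0 < c) (hq : -1 < q) :
    ∫ t in Ioi 0, t ^ q * exp (-(c * t) ^ b) = c ^ (-(q + 1)) / b * Gamma ((q + 1) / b) := by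
  rw [setIntegral_congr_fun measurableSet_Ioi (rpow_mul_exp_neg_rpow_mul_eqOn hc.le),
    integral_rpow_mul_exp_neg_mul_rpow hb hq (rpow_pos_of_pos hc b), ← rpow_mul hc.le]
  field_simp

theorem integrable_abs_rpow_mul_exp_neg_rpow_mul (hb : 0 < b) (hc : 0 < c) (hq : -1 < q) :
    Integrable fun y : ℝ ↦ |y| ^ q * exp (-(c * |y|) ^ b) :=
  integrable_comp_abs_of_integrableOn_Ioi (integrableOn_rpow_mul_exp_neg_rpow_mul hb hc hq)

theorem integral_abs_rpow_mul_exp_neg_rpow_mul (hb : 0 < b) (hc : 0 < c) (hq : -1 < q) :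
    ∫ y : ℝ, |y| ^ q * exp (-(c * |y|) ^ b) = 2 * c ^ (-(q + 1)) / b * Gamma ((q + 1) / b) := by
  rw [integral_comp_abs (f := fun t ↦ t ^ q * exp (-(c * t) ^ b)),
    integral_Ioi_rpow_mul_exp_neg_rpow_mul hb hc hq]
  ring

end GammaMoments

noncomputable def gndScale (b : ℝ) : ℝ := √(Gamma (3 / b) / Gamma (1 / b))

noncomputable def gndDensity (b σ y : ℝ) : ℝ :=
  b * gndScale b / (2 * σ * Gamma (1 / b)) * exp (-(gndScale b * |y| / σ) ^ b)

section GeneralizedNormal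

variable {b σ q : ℝ}

theorem gndScale_pos (hb : 0 < b) : 0 < gndScale b :=
  sqrt_pos.mpr (div_pos (Gamma_pos_of_pos (by positivity)) (Gamma_pos_of_pos (by positivity)))

theorem gndScale_sq (hb : 0 < b) : gndScale b ^ 2 = Gamma (3 / b) / Gamma (1 / b) :=
  sq_sqrt (div_pos (Gamma_pos_of_pos (by positivity)) (Gamma_pos_of_pos (by positivity))).le

theorem gndDensity_eq (b σ y : ℝ) : gndDensity b σ y =
    b * (gndScale b / σ) / (2 * Gamma (1 / b)) * exp (-(gndScale b / σ * |y|) ^ b) := by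
  unfold gndDensity
  rw [div_mul_eq_mul_div₀]
  ring_nf

theorem gndDensity_neg (b σ y : ℝ) : gndDensity b σ (-y) = gndDensity b σ y := by
  rw [gndDensity, abs_neg, gndDensity]

theorem gndDensity_nonneg (hb : 0 < b) (hσ : 0 < σ) (y : ℝ) : 0 ≤ gndDensity b σ y := by
  have := Gamma_pos_of_pos (one_div_pos.mpr hb)
  have := gndScale_pos hb
  unfold gndDensity
  positivity

theorem integrable_abs_rpow_mul_gndDensity (hb : 0 < b) (hσ : 0 < σ) (hq : -1 < q) :
    Integrable fun y ↦ |y| ^ q * gndDensity b σ y := by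
  simp_rw [gndDensity_eq, mul_left_comm (|_| ^ q)]
  exact (integrable_abs_rpow_mul_exp_neg_rpow_mul hb (div_pos (gndScale_pos hb) hσ) hq).const_mul _

theorem integral_abs_rpow_mul_gndDensity (hb : 0 < b) (hσ : 0 < σ) (hq : -1 < q) :
    ∫ y, |y| ^ q * gndDensity b σ y =
      (σ / gndScale b) ^ q * Gamma ((q + 1) / b) / Gamma (1 / b) := by
  have hc : 0 < gndScale b / σ := div_pos (gndScale_pos hb) hσ
  have hΓ : 0 < Gamma (1 / b) := Gamma_pos_of_pos (by positivity)
  simp_rw [gndDensity_eq, mul_left_comm (|_| ^ q)]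
  rw [integral_const_mul, integral_abs_rpow_mul_exp_neg_rpow_mul hb hc hq, neg_add,
    rpow_add hc, rpow_neg_one, rpow_neg hc.le, ← inv_rpow hc.le, inv_div]
  have hs := (gndScale_pos hb).ne'
  field_simp

theorem integrable_gndDensity (hb : 0 < b) (hσ : 0 < σ) : Integrable (gndDensity b σ) := by
  simpa using integrable_abs_rpow_mul_gndDensity hb hσ (q := 0) (by norm_num)

theorem integrable_mul_gndDensity (hb : 0 < b) (hσ : 0 < σ) :
    Integrable fun y ↦ y * gndDensity b σ y := by
  refine (integrable_abs_rpow_mul_gndDensity hb hσ (q := 1) (by norm_num)).mono' ?_ ?_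
  · unfold gndDensity; fun_prop
  · refine .of_forall fun y ↦ ?_
    rw [rpow_one, norm_mul, norm_of_nonneg (gndDensity_nonneg hb hσ y), norm_eq_abs]

theorem integral_gndDensity (hb : 0 < b) (hσ : 0 < σ) : ∫ y, gndDensity b σ y = 1 := by
  have h := integral_abs_rpow_mul_gndDensity hb hσ (q := 0) (by norm_num)
  simp only [rpow_zero, one_mul, zero_add] at h
  rwa [div_self (Gamma_pos_of_pos (by positivity)).ne'] at h

theorem integral_sq_mul_gndDensity (hb : 0 < b) (hσ : 0 < σ) :
    ∫ y, y ^ 2 * gndDensity b σ y = σ ^ 2 := by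
  have h := integral_abs_rpow_mul_gndDensity hb hσ (q := 2) (by norm_num)
  simp only [rpow_two, sq_abs] at h
  have hΓ1 : 0 < Gamma (1 / b) := Gamma_pos_of_pos (by positivity)
  have hΓ3 : 0 < Gamma (3 / b) := Gamma_pos_of_pos (by positivity)
  rw [h, div_pow, gndScale_sq hb, show ((2 : ℝ) + 1) / b = 3 / b by norm_num]
  field_simp

end GeneralizedNormal

open MeasureTheory in
/-- The generalized normal distribution `G(μ,σ,b)` has mean `μ` and variance `σ²`. -/
theorem gnd_mean_and_variance (b σ μ : ℝ) (hb : 0 < b) (hσ : 0 < σ) :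
    (∫ x : ℝ, x *
        ((b * Real.sqrt (Real.Gamma (3 / b) / Real.Gamma (1 / b)) /
            (2 * σ * Real.Gamma (1 / b))) *
          Real.exp (-(Real.sqrt (Real.Gamma (3 / b) / Real.Gamma (1 / b)) * |x - μ| / σ) ^ b)))
        = μ ∧
    (∫ x : ℝ, (x - μ) ^ 2 *
        ((b * Real.sqrt (Real.Gamma (3 / b) / Real.Gamma (1 / b)) /
            (2 * σ * Real.Gamma (1 / b))) *
          Real.exp (-(Real.sqrt (Real.Gamma (3 / b) / Real.Gamma (1 / b)) * |x - μ| / σ) ^ b)))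
        = σ ^ 2 := by
  change ∫ x, x * gndDensity b σ (x - μ) = μ ∧
    ∫ x, (x - μ) ^ 2 * gndDensity b σ (x - μ) = σ ^ 2
  constructor
  · rw [integral_mul_comp_sub_of_even (gndDensity_neg b σ) (integrable_gndDensity hb hσ)
      (integrable_mul_gndDensity hb hσ), integral_gndDensity hb hσ, mul_one]
  · rw [integral_sub_right_eq_self (fun y ↦ y ^ 2 * gndDensity b σ y) μ]
    exact integral_sq_mul_gndDensity hb hσ
end

section
/- For an even positive integer b, σ* > 0, and μ ∈ ℝ, the KL divergence between G(0,σ*,b)-type densities p(x) ∝ exp(−(x/σ*)^b) and q(x) ∝ exp(−((x−μ)/σ*)^b) equals ∫ p(x)·[((x−μ)/σ*)^b − (x/σ*)^b] dx = (1/Γ(1/b)) · ∑_{i=1}^{b/2} C(b,2i)·(μ/σ*)^{2i}·Γ((b+1−2i)/b), where C(b,2i) is the binomial coefficient. -/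
/-!
After the substitution `x = σ* t` the divergence becomes
`(b / (2 Γ(1/b))) ∫ e^{-t^b} ((t - ν)^b - t^b) dt` with `ν = μ/σ*`. Expanding `(t - ν)^b`
binomially leaves the moments `∫ t^k e^{-t^b} dt` with `k < b`: since `b` is even these vanish
for odd `k` and equal `(2/b) Γ((k+1)/b)` for even `k`, so only the even powers `ν^{2i}` survive.
-/

open MeasureTheory Finset

theorem add_pow_eq_pow_add_sum_Icc {R : Type*} [CommSemiring R] (a t : R) (n : ℕ) :
    (a + t) ^ n = t ^ n + ∑ m ∈ Icc 1 n, a ^ m * t ^ (n - m) * n.choose m := by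
  rw [add_pow, range_eq_Ico, sum_eq_sum_Ico_succ_bot n.succ_pos, zero_add, Nat.succ_eq_add_one,
    Ico_add_one_right_eq_Icc]
  simp

theorem sum_Icc_ite_even {M : Type*} [AddCommMonoid M] (n : ℕ) (f : ℕ → M) :
    ∑ m ∈ Icc 1 n, (if Even m then f m else 0) = ∑ i ∈ Icc 1 (n / 2), f (2 * i) := by
  rw [← sum_filter]
  refine sum_nbij' (· / 2) (2 * ·) ?_ ?_ ?_ ?_ ?_ <;>
    simp only [mem_filter, mem_Icc, Nat.even_iff]
  iterate 4 (intros; omega)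
  intro m ⟨_, hm⟩
  rw [Nat.mul_div_cancel' (Nat.dvd_of_mod_eq_zero hm)]

theorem integrable_of_integrableOn_Ioi_of_comp_neg {f : ℝ → ℝ} {c : ℝ}
    (hf : IntegrableOn f (Set.Ioi 0)) (hneg : ∀ t, f (-t) = c * f t) : Integrable f := by
  rw [← integrableOn_univ, ← Set.Iic_union_Ioi (a := 0)]
  refine IntegrableOn.union ?_ hf
  rw [← Measure.map_neg_eq_self (volume : Measure ℝ),
    measurableEmbedding_neg.integrableOn_map_iff]
  simp only [Function.comp_def, Set.neg_preimage, Set.neg_Iic, neg_zero, hneg]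
  exact (Iff.mpr integrableOn_Ici_iff_integrableOn_Ioi hf).const_mul c

section Moments

variable {b : ℕ}

theorem integrableOn_Ioi_pow_mul_exp_neg_pow (k : ℕ) (hb : 0 < b) :
    IntegrableOn (fun t : ℝ => t ^ k * Real.exp (-t ^ b)) (Set.Ioi 0) := by
  simpa [Real.rpow_natCast] using
    integrableOn_rpow_mul_exp_neg_rpow (s := k) (p := b) (by linarith [k.cast_nonneg (α := ℝ)])
      (by exact_mod_cast hb)

theorem integral_Ioi_pow_mul_exp_neg_pow (k : ℕ) (hb : 0 < b) :
    ∫ t in Set.Ioi (0 : ℝ), t ^ k * Real.exp (-t ^ b) = (1 / b) * Real.Gamma ((k + 1) / b) := by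
  simpa [Real.rpow_natCast] using
    integral_rpow_mul_exp_neg_rpow (q := k) (p := b) (by exact_mod_cast hb)
      (by linarith [k.cast_nonneg (α := ℝ)])

theorem integrable_pow_mul_exp_neg_pow (k : ℕ) (hb : 0 < b) (hbe : Even b) :
    Integrable (fun t : ℝ => t ^ k * Real.exp (-t ^ b)) :=
  integrable_of_integrableOn_Ioi_of_comp_neg (c := (-1) ^ k)
    (integrableOn_Ioi_pow_mul_exp_neg_pow k hb) fun t => by rw [neg_pow, hbe.neg_pow, mul_assoc]

theorem integral_pow_mul_exp_neg_pow_of_even {k : ℕ} (hb : 0 < b) (hbe : Even b) (hk : Even k) :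
    ∫ t : ℝ, t ^ k * Real.exp (-t ^ b) = (2 / b) * Real.Gamma ((k + 1) / b) := by
  have habs : (fun t : ℝ => t ^ k * Real.exp (-t ^ b)) = fun t => |t| ^ k * Real.exp (-|t| ^ b) :=
    funext fun t => by rw [hk.pow_abs, hbe.pow_abs]
  rw [habs, integral_comp_abs (f := fun t : ℝ => t ^ k * Real.exp (-t ^ b)),
    integral_Ioi_pow_mul_exp_neg_pow k hb]
  ring

theorem integral_pow_mul_exp_neg_pow_of_odd {k : ℕ} (hbe : Even b) (hk : Odd k) :
    ∫ t : ℝ, t ^ k * Real.exp (-t ^ b) = 0 := by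
  have hsymm := integral_neg_eq_self (fun t : ℝ => t ^ k * Real.exp (-t ^ b)) volume
  simp only [hk.neg_pow, hbe.neg_pow, neg_mul, integral_neg] at hsymm
  linarith

theorem integral_exp_neg_pow_mul_sub_pow_sub_pow (hb : 0 < b) (hbe : Even b) (a : ℝ) :
    ∫ t : ℝ, Real.exp (-t ^ b) * ((t - a) ^ b - t ^ b) =
      (2 / b) * ∑ i ∈ Icc 1 (b / 2),
        (b.choose (2 * i) : ℝ) * a ^ (2 * i) * Real.Gamma (((b : ℝ) + 1 - 2 * i) / b) := by
  have hexpand : ∀ t : ℝ, Real.exp (-t ^ b) * ((t - a) ^ b - t ^ b) =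
      ∑ m ∈ Icc 1 b, (b.choose m * (-a) ^ m) * (t ^ (b - m) * Real.exp (-t ^ b)) := fun t => by
    rw [sub_eq_neg_add t a, add_pow_eq_pow_add_sum_Icc, add_sub_cancel_left, mul_sum]
    exact sum_congr rfl fun m _ => by ring
  have hmoment : ∀ m ∈ Icc 1 b,
      (b.choose m * (-a) ^ m) * ∫ t : ℝ, t ^ (b - m) * Real.exp (-t ^ b) =
        if Even m then
          (2 / b) * ((b.choose m : ℝ) * (-a) ^ m * Real.Gamma (((b - m : ℕ) + 1) / b))
        else 0 := by
    intro m hm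
    have hparity : Even (b - m) ↔ Even m := by
      rw [Nat.even_sub (mem_Icc.mp hm).2]
      simp [hbe]
    split_ifs with h
    · rw [integral_pow_mul_exp_neg_pow_of_even hb hbe (hparity.mpr h)]
      ring
    · rw [integral_pow_mul_exp_neg_pow_of_odd hbe (Nat.not_even_iff_odd.mp (h ∘ hparity.mp)),
        mul_zero]
  simp_rw [hexpand]
  rw [integral_finsetSum _ fun m _ => (integrable_pow_mul_exp_neg_pow _ hb hbe).const_mul _]
  simp_rw [integral_const_mul]
  rw [sum_congr rfl hmoment, sum_Icc_ite_even, mul_sum]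
  refine sum_congr rfl fun i hi => ?_
  have hle : 2 * i ≤ b := by have := (mem_Icc.mp hi).2; omega
  push_cast [Nat.cast_sub hle, (even_two_mul i).neg_pow]
  ring_nf

end Moments

open MeasureTheory Finset in
/-- KL divergence between two generalized normal densities with even shape parameter `b`:
`KL(p‖q) = ∫ p(x)·[((x−μ)/σ*)^b − (x/σ*)^b] dx
         = (1/Γ(1/b)) · ∑_{i=1}^{b/2} C(b,2i)·(μ/σ*)^{2i}·Γ((b+1−2i)/b)`. -/
theorem gnd_kl_divergence (b : ℕ) (hb : 0 < b) (hbe : Even b) (σs μ : ℝ) (hσ : 0 < σs) :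
    (∫ x : ℝ,
        ((b / (2 * σs * Real.Gamma (1 / b))) * Real.exp (-((x / σs) ^ b))) *
          Real.log (((b / (2 * σs * Real.Gamma (1 / b))) * Real.exp (-((x / σs) ^ b))) /
            ((b / (2 * σs * Real.Gamma (1 / b))) * Real.exp (-(((x - μ) / σs) ^ b)))) =
      ∫ x : ℝ,
        ((b / (2 * σs * Real.Gamma (1 / b))) * Real.exp (-((x / σs) ^ b))) *
          (((x - μ) / σs) ^ b - (x / σs) ^ b)) ∧
    (∫ x : ℝ,
        ((b / (2 * σs * Real.Gamma (1 / b))) * Real.exp (-((x / σs) ^ b))) *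
          (((x - μ) / σs) ^ b - (x / σs) ^ b)) =
      (1 / Real.Gamma (1 / b)) *
        ∑ i ∈ Finset.Icc 1 (b / 2),
          (b.choose (2 * i) : ℝ) * (μ / σs) ^ (2 * i) *
            Real.Gamma (((b : ℝ) + 1 - 2 * i) / b) := by
  have hbR : (0 : ℝ) < b := Nat.cast_pos.mpr hb
  have hΓ : 0 < Real.Gamma (1 / (b : ℝ)) := Real.Gamma_pos_of_pos (by positivity)
  set c : ℝ := b / (2 * σs * Real.Gamma (1 / b)) with hc
  have hc0 : c ≠ 0 := by positivity
  constructor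
  · congr with x
    rw [mul_div_mul_left _ _ hc0, ← Real.exp_sub, Real.log_exp]
    ring
  · calc ∫ x : ℝ, c * Real.exp (-((x / σs) ^ b)) * (((x - μ) / σs) ^ b - (x / σs) ^ b)
        = ∫ x : ℝ,
            c * (fun t : ℝ => Real.exp (-t ^ b) * ((t - μ / σs) ^ b - t ^ b)) (x / σs) := by
          simp only [sub_div, mul_assoc]
      _ = c * (σs * ∫ t : ℝ, Real.exp (-t ^ b) * ((t - μ / σs) ^ b - t ^ b)) := by
          rw [integral_const_mul, Measure.integral_comp_div
              (fun t : ℝ => Real.exp (-t ^ b) * ((t - μ / σs) ^ b - t ^ b)) σs,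
            smul_eq_mul, abs_of_pos hσ]
      _ = _ := by
          rw [integral_exp_neg_pow_mul_sub_pow_sub_pow hb hbe, hc]
          field_simp
end

section
/- Rényi divergence of two Laplace distributions: for α > 1, L ≥ 0, and scale parameter λ > 0, D_α(Lap(0,λ) || Lap(L,λ)) = (1/(α−1))·ln( (α/(2α−1))·exp((α−1)L/λ) + ((α−1)/(2α−1))·exp(−αL/λ) ). -/
/-!
The integrand `Lap(0,λ)^α · Lap(L,λ)^(1-α)` is `(2λ)⁻¹ · exp (a|x| + b|x - L|)` with
`a = -α/λ` and `b = (α-1)/λ`. For `L ≥ 0` the exponent is affine on `(-∞, 0]`, `[0, L]` and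
`[L, ∞)`, so the integral splits into three elementary exponential integrals; the tails converge
because `a + b = -1/λ < 0`, and the middle piece needs `a ≠ b`, i.e. `2α ≠ 1`.
-/

open MeasureTheory Set Real

theorem integral_eq_Iic_add_Ioc_add_Ioi {E : Type*} [NormedAddCommGroup E] [NormedSpace ℝ E]
    {f : ℝ → E} {a b : ℝ} (hab : a ≤ b) (h_left : IntegrableOn f (Iic a))
    (h_mid : IntegrableOn f (Ioc a b)) (h_right : IntegrableOn f (Ioi b)) :
    ∫ x, f x = (∫ x in Iic a, f x) + (∫ x in Ioc a b, f x) + ∫ x in Ioi b, f x := by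
  have h_Iic : IntegrableOn f (Iic b) := by
    simpa only [Iic_union_Ioc_eq_Iic hab] using h_left.union h_mid
  rw [← intervalIntegral.integral_Iic_add_Ioi h_Iic h_right, ← Iic_union_Ioc_eq_Iic hab,
    setIntegral_union (Iic_disjoint_Ioc le_rfl) measurableSet_Ioc h_left h_mid]

theorem integral_exp_mul_Ioc {k : ℝ} (hk : k ≠ 0) {a b : ℝ} (hab : a ≤ b) :
    ∫ x in Ioc a b, exp (k * x) = (exp (k * b) - exp (k * a)) / k := by
  rw [← intervalIntegral.integral_of_le hab, intervalIntegral.integral_comp_mul_left exp hk,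
    integral_exp, smul_eq_mul, inv_mul_eq_div]

theorem mul_exp_rpow_mul_mul_exp_rpow_one_sub {c : ℝ} (hc : 0 < c) (u v α : ℝ) :
    (c * exp u) ^ α * (c * exp v) ^ (1 - α) = c * exp (α * u + (1 - α) * v) := by
  rw [mul_rpow hc.le (exp_nonneg u), mul_rpow hc.le (exp_nonneg v), ← exp_mul, ← exp_mul,
    mul_mul_mul_comm, ← rpow_add hc, add_sub_cancel, rpow_one, ← exp_add, mul_comm u,
    mul_comm v]

theorem integral_exp_mul_abs_add_mul_abs_sub {a b L : ℝ} (hab : a + b < 0) (hne : a ≠ b)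
    (hL : 0 ≤ L) :
    ∫ x, exp (a * |x| + b * |x - L|) =
      (exp (a * L) + exp (b * L)) / -(a + b) + (exp (a * L) - exp (b * L)) / (a - b) := by
  have h_left : EqOn (fun x ↦ exp (a * |x| + b * |x - L|))
      (fun x ↦ exp (-(a + b) * x) * exp (b * L)) (Iic 0) := by
    intro x (hx : x ≤ 0)
    dsimp only
    rw [← exp_add, abs_of_nonpos hx, abs_of_nonpos (by linarith)]
    ring_nf
  have h_mid : EqOn (fun x ↦ exp (a * |x| + b * |x - L|))
      (fun x ↦ exp ((a - b) * x) * exp (b * L)) (Ioc 0 L) := by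
    rintro x ⟨hx0, hxL⟩
    dsimp only
    rw [← exp_add, abs_of_pos hx0, abs_of_nonpos (by linarith)]
    ring_nf
  have h_right : EqOn (fun x ↦ exp (a * |x| + b * |x - L|))
      (fun x ↦ exp ((a + b) * x) * exp (-(b * L))) (Ioi L) := by
    intro x (hx : L < x)
    dsimp only
    rw [← exp_add, abs_of_pos (by linarith), abs_of_pos (by linarith)]
    ring_nf
  have hab' : 0 < -(a + b) := by linarith
  rw [integral_eq_Iic_add_Ioc_add_Ioi hL
      (IntegrableOn.congr_fun ((integrableOn_exp_mul_Iic hab' 0).mul_const _) h_left.symm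
        measurableSet_Iic)
      (Continuous.integrableOn_Ioc (by fun_prop))
      (IntegrableOn.congr_fun ((integrableOn_exp_mul_Ioi hab L).mul_const _) h_right.symm
        measurableSet_Ioi),
    setIntegral_congr_fun measurableSet_Iic h_left, setIntegral_congr_fun measurableSet_Ioc h_mid,
    setIntegral_congr_fun measurableSet_Ioi h_right, integral_mul_const, integral_mul_const,
    integral_mul_const, integral_exp_mul_Iic hab', integral_exp_mul_Ioc (sub_ne_zero.2 hne) hL,
    integral_exp_mul_Ioi hab]
  have h_exp_add : exp ((a + b) * L) = exp (a * L) * exp (b * L) := by rw [← exp_add]; ring_nf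
  have h_exp_sub : exp ((a - b) * L) = exp (a * L) / exp (b * L) := by rw [← exp_sub]; ring_nf
  simp only [h_exp_add, h_exp_sub, exp_neg, mul_zero, exp_zero]
  field_simp [hab'.ne', sub_ne_zero.2 hne]
  ring

theorem integral_laplace_rpow_mul_laplace_rpow_one_sub {α L lam : ℝ} (hα : 2 * α - 1 ≠ 0)
    (hL : 0 ≤ L) (hlam : 0 < lam) :
    ∫ x : ℝ, ((1 / (2 * lam)) * exp (-|x| / lam)) ^ α *
        ((1 / (2 * lam)) * exp (-|x - L| / lam)) ^ (1 - α) =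
      (α / (2 * α - 1)) * exp ((α - 1) * L / lam) +
        ((α - 1) / (2 * α - 1)) * exp (-α * L / lam) := by
  have h_integrand : ∀ x : ℝ, ((1 / (2 * lam)) * exp (-|x| / lam)) ^ α *
      ((1 / (2 * lam)) * exp (-|x - L| / lam)) ^ (1 - α) =
        1 / (2 * lam) * exp (-α / lam * |x| + (α - 1) / lam * |x - L|) := by
    intro x
    rw [mul_exp_rpow_mul_mul_exp_rpow_one_sub (by positivity)]
    ring_nf
  have h_sum : -α / lam + (α - 1) / lam < 0 := by
    rw [← add_div]
    exact div_neg_of_neg_of_pos (by linarith) hlam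
  have h_ne : -α / lam ≠ (α - 1) / lam := by
    intro h
    rw [div_left_inj' hlam.ne'] at h
    exact hα (by linarith)
  simp only [h_integrand]
  rw [integral_const_mul, integral_exp_mul_abs_add_mul_abs_sub h_sum h_ne hL,
    show -α / lam * L = -α * L / lam by ring, show (α - 1) / lam * L = (α - 1) * L / lam by ring,
    show -α / lam + (α - 1) / lam = -(1 / lam) by ring,
    show -α / lam - (α - 1) / lam = -(2 * α - 1) / lam by ring]
  field_simp
  ring

open MeasureTheory in
/-- Rényi divergence of order `α > 1` between `Lap(0,λ)` and `Lap(L,λ)`: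
`D_α = (1/(α−1))·ln((α/(2α−1))·e^{(α−1)L/λ} + ((α−1)/(2α−1))·e^{−αL/λ})`. -/
theorem renyi_divergence_laplace (α L lam : ℝ) (hα : 1 < α) (hL : 0 ≤ L) (hlam : 0 < lam) :
    (1 / (α - 1)) * Real.log
        (∫ x : ℝ,
          ((1 / (2 * lam)) * Real.exp (-|x| / lam)) ^ α *
            ((1 / (2 * lam)) * Real.exp (-|x - L| / lam)) ^ (1 - α)) =
      (1 / (α - 1)) * Real.log
        ((α / (2 * α - 1)) * Real.exp ((α - 1) * L / lam) +
          ((α - 1) / (2 * α - 1)) * Real.exp (-α * L / lam)) := by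
  rw [integral_laplace_rpow_mul_laplace_rpow_one_sub (by linarith) hL hlam]
end
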